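/- If p_1 = p_2 + 1 with p_2 > 1, then for every cut point c ∈ [0,1) the two-party apportionment sequence over one period is the alternating sequence 1, 2, 1, 2, ..., 1 (p_2 pairs '1,2' followed by a final 1), while for c = 1 it is 1, 2, 1, 2, ..., 1, 1, 2 (p_2 − 1 pairs then 1,1,2). -/

import Mathlib

open ENNReal

/-- Number of seats party `i` holds after the first `h` seats of sequence `s`. -/
def alloc {n : ℕ} (s : ℕ → Fin n) (i : Fin n) (h : ℕ) : ℕ :=
  ((Finset.range h).filter (fun t => s t = i)).card

/-- `s` is the apportionment sequence of the stationary divisor method with cut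
point `c` for votes `p`: each seat goes to the party maximizing `pᵢ/(aᵢ+c)`
(computed in `ℝ≥0∞`, so that `pᵢ/0 = ∞` encodes the Adams convention), with
ties broken in favor of the smaller index. -/
def IsStationarySeq {n : ℕ} (p : Fin n → ℕ) (c : NNReal) (s : ℕ → Fin n) : Prop :=
  ∀ h : ℕ, ∀ j : Fin n,
    (p j : ℝ≥0∞) / ((alloc s j h : ℝ≥0∞) + (c : ℝ≥0∞)) <
        (p (s h) : ℝ≥0∞) / ((alloc s (s h) h : ℝ≥0∞) + (c : ℝ≥0∞)) ∨
    ((p (s h) : ℝ≥0∞) / ((alloc s (s h) h : ℝ≥0∞) + (c : ℝ≥0∞)) =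
        (p j : ℝ≥0∞) / ((alloc s j h : ℝ≥0∞) + (c : ℝ≥0∞)) ∧ s h ≤ j)

/-!
With allocations `a₀, a₁`, party `0` (votes `p₂ + 1`) takes the next seat iff
`p₂ (a₀ - a₁) ≤ a₁ + c`. From equal allocations party `0` wins, and once it leads by
one seat party `1` wins as long as `a₁ + c < p₂`, so the sequence alternates while
`a₁ < p₂ - 1`. At `a₁ = p₂ - 1` a cut point `c < 1` keeps the alternation to the end
of the period, whereas `c = 1` produces a tie, broken for party `0`, after which
party `1` takes the last seat.
-/

theorem ENNReal.div_le_div_iff_mul_le_mul {a b x y : ℝ≥0∞} (hb₀ : b ≠ 0) (hb : b ≠ ∞)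
    (hx : x ≠ ∞) (hy : y ≠ ∞) : a / x ≤ b / y ↔ a * y ≤ b * x := by
  rcases eq_or_ne x 0 with rfl | hx₀
  · rcases eq_or_ne a 0 with rfl | ha₀
    · simp
    · simp [ENNReal.div_zero ha₀, ENNReal.div_eq_top, hb₀, hb, ha₀]
  · rw [ENNReal.div_le_iff_le_mul (.inl hx₀) (.inl hx), div_eq_mul_inv, mul_right_comm,
      ← div_eq_mul_inv, ENNReal.le_div_iff_mul_le (.inr (mul_ne_zero hb₀ hx₀)) (.inl hy)]

theorem alloc_succ {n : ℕ} (s : ℕ → Fin n) (i : Fin n) (h : ℕ) :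
    alloc s i (h + 1) = alloc s i h + if s h = i then 1 else 0 := by
  unfold alloc
  rw [Finset.range_add_one, Finset.filter_insert]
  split
  · rw [Finset.card_insert_of_notMem (by simp)]
  · simp

theorem IsStationarySeq.eq_zero_iff {p : Fin 2 → ℕ} {c : NNReal} {s : ℕ → Fin 2}
    (hs : IsStationarySeq p c s) (hp : p 0 ≠ 0) (h : ℕ) :
    s h = 0 ↔ (p 1 : ℝ) * (alloc s 0 h + c) ≤ p 0 * (alloc s 1 h + c) := by
  have key : (p 1 : ℝ≥0∞) / (alloc s 1 h + c) ≤ p 0 / (alloc s 0 h + c) ↔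
      (p 1 : ℝ) * (alloc s 0 h + c) ≤ p 0 * (alloc s 1 h + c) := by
    rw [ENNReal.div_le_div_iff_mul_le_mul (by simpa) (by simp) (by simp) (by simp)]
    have hcast := (@ENNReal.coe_le_coe (p 1 * (alloc s 0 h + c)) (p 0 * (alloc s 1 h + c))).trans
      NNReal.coe_le_coe.symm
    push_cast at hcast
    exact hcast
  rw [← key]
  constructor
  · intro h0
    rcases hs h 1 with hlt | ⟨heq, -⟩
    · simpa [h0] using hlt.le
    · simpa [h0] using heq.ge
  · intro hle
    by_contra h0
    have h1 := Fin.eq_one_of_ne_zero _ h0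
    rcases hs h 0 with hlt | ⟨-, hle'⟩
    · simp only [h1] at hlt
      exact (hlt.trans_le hle).false
    · simp [h1] at hle'

theorem alloc_of_alternating {s : ℕ → Fin 2} {t : ℕ}
    (hs : ∀ u < t, s u = if u % 2 = 0 then 0 else 1) :
    alloc s 0 t = (t + 1) / 2 ∧ alloc s 1 t = t / 2 := by
  induction t with
  | zero => simp [alloc]
  | succ t ih =>
    obtain ⟨h0, h1⟩ := ih fun u hu => hs u (by omega)
    rw [alloc_succ, alloc_succ, h0, h1, hs t (by omega)]
    split_ifs <;> simp_all <;> omega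

section ConsecutiveVotes

variable {p2 : ℕ} {c : NNReal} {s : ℕ → Fin 2}

theorem IsStationarySeq.eq_zero_iff_of_consecutive (hs : IsStationarySeq ![p2 + 1, p2] c s)
    (h : ℕ) : s h = 0 ↔ (p2 : ℝ) * (alloc s 0 h - alloc s 1 h) ≤ alloc s 1 h + c := by
  rw [hs.eq_zero_iff (by simp) h]
  simp only [Matrix.cons_val_zero, Matrix.cons_val_one, Nat.cast_add, Nat.cast_one]
  constructor <;> intro <;> linarith

theorem IsStationarySeq.alternating_of_consecutive (hs : IsStationarySeq ![p2 + 1, p2] c s)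
    {n : ℕ} (hn : ∀ k : ℕ, 2 * k + 1 < n → (k : ℝ) + c < p2) :
    ∀ t < n, s t = if t % 2 = 0 then 0 else 1 := by
  intro t
  induction t using Nat.strong_induction_on with
  | _ t ih =>
  intro ht
  obtain ⟨h0, h1⟩ := alloc_of_alternating fun u hu => ih u hu (hu.trans ht)
  have hst := hs.eq_zero_iff_of_consecutive t
  rw [h0, h1] at hst
  obtain ⟨k, rfl | rfl⟩ := Nat.even_or_odd' t
  · rw [if_pos (by omega), hst, show (2 * k + 1) / 2 = k by omega,
      show 2 * k / 2 = k by omega, sub_self, mul_zero]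
    positivity
  · rw [if_neg (by omega)]
    refine Fin.eq_one_of_ne_zero _ fun h => ?_
    rw [hst, show (2 * k + 1 + 1) / 2 = k + 1 by omega, show (2 * k + 1) / 2 = k by omega]
      at h
    have := hn k ht
    push_cast at h
    linarith

theorem IsStationarySeq.last_two_of_consecutive_of_cut_one {k : ℕ}
    (hs : IsStationarySeq ![k + 1 + 1, k + 1] 1 s)
    (hpre : ∀ t < 2 * k + 1, s t = if t % 2 = 0 then 0 else 1) :
    s (2 * k + 1) = 0 ∧ s (2 * k + 2) = 1 := by
  obtain ⟨h0, h1⟩ := alloc_of_alternating hpre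
  rw [show (2 * k + 1 + 1) / 2 = k + 1 by omega] at h0
  rw [show (2 * k + 1) / 2 = k by omega] at h1
  have hodd : s (2 * k + 1) = 0 := by
    rw [hs.eq_zero_iff_of_consecutive, h0, h1]
    push_cast
    linarith
  refine ⟨hodd, Fin.eq_one_of_ne_zero _ fun h => ?_⟩
  rw [hs.eq_zero_iff_of_consecutive, alloc_succ s 0 (2 * k + 1), alloc_succ s 1 (2 * k + 1),
    hodd, h0, h1] at h
  push_cast at h
  linarith

end ConsecutiveVotes

theorem consecutive_votes_sequence_general (p2 : ℕ) (hp2 : 1 < p2)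
    (c : NNReal) (s : ℕ → Fin 2)
    (hs : IsStationarySeq ![p2 + 1, p2] c s) :
    (c < 1 → ∀ t, t < 2 * p2 + 1 → s t = if t % 2 = 0 then 0 else 1) ∧
    (c = 1 → ∀ t, t < 2 * p2 + 1 →
      s t = if t = 2 * p2 then 1 else
        if t < 2 * p2 - 2 then (if t % 2 = 0 then 0 else 1) else 0) := by
  constructor
  · intro hc1 t
    refine hs.alternating_of_consecutive (fun k hk => ?_) t
    have hk : (k : ℝ) + 1 ≤ p2 := by exact_mod_cast (by omega : k + 1 ≤ p2)
    have hc : (c : ℝ) < 1 := by exact_mod_cast hc1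
    linarith
  · rintro rfl t ht
    obtain ⟨k, rfl⟩ : ∃ k, p2 = k + 1 := ⟨p2 - 1, by omega⟩
    have hpre : ∀ t < 2 * k + 1, s t = if t % 2 = 0 then 0 else 1 :=
      hs.alternating_of_consecutive fun j hj => by
        push_cast
        exact_mod_cast (by omega : j + 1 < k + 1)
    obtain ⟨hodd, heven⟩ := hs.last_two_of_consecutive_of_cut_one hpre
    rcases (by omega : t < 2 * k + 1 ∨ t = 2 * k + 1 ∨ t = 2 * k + 2) with hlt | rfl | rfl
    · rw [hpre t hlt]
      split_ifs <;> omega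
    · rw [hodd, if_neg (by omega), if_neg (by omega)]
    · rw [heven, if_pos (by omega)]

/-- For consecutive vote totals `p_1 = p_2 + 1` with `p_2 > 1`: for every cut
point `c ∈ [0,1)` one period of the two-party sequence is the alternating
sequence `1,2,1,2,…,1` (of length `2p_2+1`), while for `c = 1` it is
`1,2,…,1,2,1,1,2` (`p_2 − 1` pairs `1,2` followed by `1,1,2`).  Parties are
indexed `0` (votes `p_2+1`) and `1` (votes `p_2`). -/
theorem consecutive_votes_sequence (p2 : ℕ) (hp2 : 1 < p2)
    (c : NNReal) (hc : c ≤ 1) (s : ℕ → Fin 2)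
    (hs : IsStationarySeq ![p2 + 1, p2] c s) :
    (c < 1 → ∀ t, t < 2 * p2 + 1 → s t = if t % 2 = 0 then 0 else 1) ∧
    (c = 1 → ∀ t, t < 2 * p2 + 1 →
      s t = if t = 2 * p2 then 1 else
        if t < 2 * p2 - 2 then (if t % 2 = 0 then 0 else 1) else 0) :=
  consecutive_votes_sequence_general p2 hp2 c s hs
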